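/- For strictly increasing positive integer lists l=(l_1,...,l_m) (m ≥ 0) and q=(q_1,...,q_n) (n ≥ 1), the polynomial P_{l,q}(x) defined by (1.3), (1.1) and (5.1) satisfies P_{l,q}(q_n - l_m - n + m - 1) = (1/2)·P_{l,q^{(n)}}(q_n - l_m - n + m - 1), where q^{(n)} is q with its last entry removed and l_m is interpreted as 0 if m = 0. -/

import Mathlib

/-- The rising factorial `(a)_j = a(a+1)···(a+j-1)`. -/
noncomputable def rfac {K : Type*} [Field K] (a : K) (j : ℕ) : K :=
  ∏ i ∈ Finset.range j, (a + i)

/-- The product `(x+2)(x+3)^2···(x+n-1)^2(x+n)`, whose bases grow by one from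
factor to factor while the exponents increase by one up to the middle and then
decrease by one (empty for `n ≤ 1`). -/
noncomputable def tentInt {K : Type*} [Field K] (x : K) (n : ℕ) : K :=
  ∏ j ∈ Finset.Icc 2 n, (x + j) ^ (min (j - 1) (n + 1 - j))

/-- The product `(x+3/2)(x+5/2)^2···(x+(2n-1)/2)^2(x+(2n+1)/2)`, bases growing by
one, exponents rising by one to the middle and then falling (empty for `n = 0`). -/
noncomputable def tentHalf {K : Type*} [Field K] (x : K) (n : ℕ) : K :=
  ∏ j ∈ Finset.Icc 1 n, (x + j + 1 / 2) ^ (min j (n + 1 - j))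

/-- The product `(x+1)(x+2)^2···(x+m-1)^2(x+m)`, bases growing by one, exponents
rising by one to the middle and then falling (empty for `m = 0`). -/
noncomputable def tentIntBar {K : Type*} [Field K] (x : K) (m : ℕ) : K :=
  ∏ j ∈ Finset.Icc 1 m, (x + j) ^ (min j (m + 1 - j))

/-- The product `(x+3/2)(x+5/2)^2···(x+(2m-3)/2)^2(x+(2m-1)/2)`, bases growing by
one, exponents rising by one to the middle and then falling (empty for `m ≤ 1`). -/
noncomputable def tentHalfBar {K : Type*} [Field K] (x : K) (m : ℕ) : K :=
  ∏ j ∈ Finset.Icc 1 (m - 1), (x + j + 1 / 2) ^ (min j (m - j))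

/-- The polynomial `B_{m,n}(x)` of formula (1.1). -/
noncomputable def Bpoly {K : Type*} [Field K] (m n : ℕ) (x : K) : K :=
  ((2 : K) ^ (m * n + m * (m - 1) / 2))⁻¹ *
    rfac (x + n + 1) m * rfac (x + n + 2) m *
    tentInt x n * tentHalf x n *
    (∏ i ∈ Finset.Icc 1 n, rfac (x + i) m / rfac (x + i + 1 / 2) m) *
    (∏ i ∈ Finset.Icc 1 m, rfac (2 * x + n + i + 2) (n + i - 1))

/-- The polynomial `B̄_{m,n}(x)` of formula (1.2). -/
noncomputable def Bbar {K : Type*} [Field K] (m n : ℕ) (x : K) : K :=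
  ((2 : K) ^ (m * n + n * (n + 1) / 2))⁻¹ *
    rfac (x + m + 1) n *
    tentIntBar x m * tentHalfBar x m *
    (∏ i ∈ Finset.Icc 1 m, rfac (x + i) n / rfac (x + i + 1 / 2) n) *
    (∏ i ∈ Finset.Icc 1 n, rfac (2 * x + m + i + 1) (m + i))

/-- The constant `c_{l,q}` of formula (1.3):
`c_{l,q} = 2^{C(n-m,2)-m} ∏_{i=1}^m 1/(2l_i)! ∏_{i=1}^n 1/(2q_i-1)!
  · ∏_{i<j}(l_j-l_i) ∏_{i<j}(q_j-q_i) / ∏_{i,j}(l_i+q_j)`,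
where `C(a,2) = a(a-1)/2` for any integer `a`. -/
noncomputable def cConst (l q : ℕ → ℕ) (m n : ℕ) : ℚ :=
  (2 : ℚ) ^ ((((n : ℤ) - m) * ((n : ℤ) - m - 1)) / 2 - m) *
    (∏ i ∈ Finset.Icc 1 m, ((Nat.factorial (2 * l i) : ℚ))⁻¹) *
    (∏ i ∈ Finset.Icc 1 n, ((Nat.factorial (2 * q i - 1) : ℚ))⁻¹) *
    ((∏ i ∈ Finset.Icc 1 m, ∏ j ∈ Finset.Icc (i + 1) m, ((l j : ℚ) - l i)) *
      (∏ i ∈ Finset.Icc 1 n, ∏ j ∈ Finset.Icc (i + 1) n, ((q j : ℚ) - q i))) /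
    (∏ i ∈ Finset.Icc 1 m, ∏ j ∈ Finset.Icc 1 n, ((l i : ℚ) + q j))

/-- The polynomial `P_{l,q}(x)` in the form of formula (5.1):
`P_{l,q}(x) = c_{l,q} · B_{m,n}(x+l_m-m)
  · ∏_{i=1}^m ∏_{j=i}^{l_i-1} (x+l_m-j)(x+l_m-m+n+j+2)
  · ∏_{i=1}^n ∏_{j=i}^{q_i-1} (x+l_m-m+n-j+1)(x+l_m+j+1)`. -/
noncomputable def Ppoly (l q : ℕ → ℕ) (m n : ℕ) (x : ℚ) : ℚ :=
  cConst l q m n * Bpoly m n (x + l m - m) *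
    (∏ i ∈ Finset.Icc 1 m, ∏ j ∈ Finset.Icc i (l i - 1),
      (x + l m - j) * (x + l m - m + n + j + 2)) *
    (∏ i ∈ Finset.Icc 1 n, ∏ j ∈ Finset.Icc i (q i - 1),
      (x + l m - m + n - j + 1) * (x + l m + j + 1))

/-!
Passing from `q^{(n)}` to `q` multiplies each of the four factors of `P_{l,q}` in (5.1) by an
explicit ratio: `c_{l,q}` gains `2^{n-1-m} ∏_{i<n} (q_n - q_i) / ((2q_n - 1)! ∏_i (l_i + q_n))`,
the two double products telescope in `j`, and `B_{m,n}` changes by a product of rising factorials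
(each of its tent products gains one diagonal). At `x = q_n - l_m - n + m - 1` the shifted variable `x + l_m - m + n + 1` equals `q_n`,
so the factors `l_i + q_n` and `q_n - q_i` cancel between `c_{l,q}` and the telescoped products.
What is left is a quotient of factorials and rising factorials in `q_n`, `m`, `n` alone, which
equals `1/2` by the duplication formula `(2c)_{2m} = 4^m (c)_m (c + 1/2)_m`.
-/

open Finset
open scoped Nat

lemma prod_Icc_sub_one_succ_mul {M : Type*} [CommMonoid M] (f : ℕ → M) {i L : ℕ} (hi : 0 < i)
    (hiL : i ≤ L) :
    (∏ j ∈ Icc i (L - 1), f (j + 1)) * f i = (∏ j ∈ Icc i (L - 1), f j) * f L := by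
  rw [Icc_sub_one_right_eq_Ico_of_not_isMin (by simp; omega), prod_Ico_add', mul_comm,
    ← prod_eq_prod_Ico_succ_bot (by omega), prod_Ico_succ_top hiL]

lemma prod_Icc_pow_min_succ {M : Type*} [CommMonoid M] (f : ℕ → M) {a b n : ℕ}
    (ha : a ≤ (n + 3 + b) / 2) :
    ∏ j ∈ Icc a (n + 1), f j ^ min (j - b) (n + 1 + 1 - j) =
      (∏ j ∈ Icc a n, f j ^ min (j - b) (n + 1 - j)) *
        ∏ j ∈ Icc ((n + 3 + b) / 2) (n + 1), f j := by
  have hexp : ∀ j ∈ Icc a (n + 1), f j ^ min (j - b) (n + 1 + 1 - j) =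
      f j ^ min (j - b) (n + 1 - j) * if (n + 3 + b) / 2 ≤ j then f j else 1 := by
    intro j hj
    rw [mem_Icc] at hj
    split_ifs
    · rw [← pow_succ]; congr 1; omega
    · rw [mul_one]; congr 1; omega
  rw [prod_congr rfl hexp, prod_mul_distrib, ← prod_filter]
  congr 1
  · refine (prod_subset (Icc_subset_Icc_right (by omega)) fun j hj hjn => ?_).symm
    simp only [mem_Icc] at hj hjn
    rw [show n + 1 - j = 0 by omega, _root_.min_zero, pow_zero]
  · congr 1; ext j; simp only [mem_filter, mem_Icc]; omega

lemma prod_Ioc_natCast_sub_mul_factorial {K : Type*} [CommRing K] {a b Q : ℕ} (hab : a ≤ b)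
    (hbQ : b < Q) : (∏ i ∈ Ioc a b, ((Q : K) - i)) * ((Q - b - 1)! : K) = ((Q - a - 1)! : K) := by
  induction b, hab using Nat.le_induction with
  | base => simp
  | succ b hab ih =>
    rw [prod_Ioc_succ_top hab, ← ih (by omega), show Q - b - 1 = Q - (b + 1) - 1 + 1 by omega,
      Nat.factorial_succ, show Q - (b + 1) - 1 + 1 = Q - (b + 1) by omega, Nat.cast_mul,
      Nat.cast_sub hbQ.le]
    push_cast; ring

lemma add_sub_le_of_lt_succ {s : ℕ → ℕ} {n : ℕ} (h : ∀ i, 1 ≤ i → i < n → s i < s (i + 1))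
    {i j : ℕ} (hi : 1 ≤ i) (hij : i ≤ j) (hj : j ≤ n) : s i + (j - i) ≤ s j := by
  induction j, hij using Nat.le_induction with
  | base => simp
  | succ j hij ih =>
    have := h j (by omega) (by omega)
    have := ih (by omega)
    omega

lemma self_le_of_lt_succ {s : ℕ → ℕ} {n : ℕ} (hpos : ∀ i, 1 ≤ i → i ≤ n → 1 ≤ s i)
    (h : ∀ i, 1 ≤ i → i < n → s i < s (i + 1)) : ∀ i ∈ Icc 1 n, i ≤ s i := fun i hi => by
  rw [mem_Icc] at hi
  have := add_sub_le_of_lt_succ h le_rfl hi.1 hi.2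
  have := hpos 1 le_rfl (by omega)
  omega

section rfac

variable {K : Type*} [Field K]

lemma rfac_succ (a : K) (k : ℕ) : rfac a (k + 1) = rfac a k * (a + k) :=
  prod_range_succ _ k

lemma rfac_succ' (a : K) (k : ℕ) : rfac a (k + 1) = a * rfac (a + 1) k := by
  simp only [rfac, prod_range_succ', Nat.cast_add, Nat.cast_one, Nat.cast_zero, add_zero]
  rw [mul_comm]
  congr 1
  exact prod_congr rfl fun i _ => by ring

lemma rfac_add (a : K) (k l : ℕ) : rfac a (k + l) = rfac a k * rfac (a + k) l := by
  simp only [rfac, prod_range_add, Nat.cast_add, add_assoc]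

lemma rfac_add_one_eq_prod_Icc (a : K) (k : ℕ) : rfac (a + 1) k = ∏ i ∈ Icc 1 k, (a + i) := by
  rw [rfac, ← Nat.Ico_zero_eq_range, ← Ico_add_one_right_eq_Icc, ← prod_Ico_add' _ 0 k 1]
  exact prod_congr rfl fun i _ => by push_cast; ring

lemma rfac_pos [LinearOrder K] [IsStrictOrderedRing K] {a : K} (ha : 0 < a) (k : ℕ) :
    0 < rfac a k :=
  prod_pos fun i _ => by positivity

lemma factorial_mul_rfac (a k : ℕ) : (a ! : K) * rfac ((a : K) + 1) k = ((a + k)! : K) := by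
  induction k with
  | zero => simp [rfac]
  | succ k ih =>
    rw [rfac_succ, ← mul_assoc, ih, ← add_assoc, Nat.factorial_succ]
    push_cast; ring

lemma rfac_two_mul [CharZero K] (c : K) (m : ℕ) :
    rfac (2 * c) (2 * m) = 2 ^ (2 * m) * rfac c m * rfac (c + 1 / 2) m := by
  induction m with
  | zero => simp [rfac]
  | succ m ih =>
    rw [Nat.mul_succ, rfac_succ, rfac_succ, ih, rfac_succ, rfac_succ]
    push_cast; ring

lemma prod_Icc_rfac_two (c : K) (m : ℕ) :
    ∏ i ∈ Icc 1 m, rfac (c + 2 * i) 2 = rfac (c + 2) (2 * m) := by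
  induction m with
  | zero => simp [rfac]
  | succ m ih =>
    rw [prod_Icc_succ_top (by omega), ih, Nat.mul_succ, rfac_add]
    push_cast; ring_nf

end rfac

section Bpoly

variable {K : Type*} [Field K] [CharZero K]

lemma two_pow_mul_prod_Icc_mul_prod_Icc_add_half (y : K) (n : ℕ) :
    2 ^ (n + 1) * ((∏ j ∈ Icc ((n + 4) / 2) (n + 1), (y + j)) *
      ∏ j ∈ Icc ((n + 3) / 2) (n + 1), (y + j + 1 / 2)) = rfac (2 * y + n + 3) (n + 1) := by
  -- `2 (y + j)` and `2 (y + j + 1/2)` run through `2 y + k` for the even, resp. odd, `k` in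
  -- `[n + 3, 2 n + 3]`.
  have hEven : ∏ k ∈ range (n + 1) with (n + 3 + k) % 2 = 0, (2 * y + n + 3 + k) =
      ∏ j ∈ Icc ((n + 4) / 2) (n + 1), 2 * (y + j) := by
    refine prod_nbij' (fun k => (n + 3 + k) / 2) (fun j => 2 * j - (n + 3)) ?_ ?_ ?_ ?_ ?_
      <;> intro k hk <;> simp only [mem_filter, mem_range, mem_Icc] at hk ⊢
      <;> try omega
    rw [Nat.cast_div_charZero (by omega)]
    push_cast; ring
  have hOdd : ∏ k ∈ range (n + 1) with ¬(n + 3 + k) % 2 = 0, (2 * y + n + 3 + k) =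
      ∏ j ∈ Icc ((n + 3) / 2) (n + 1), 2 * (y + j + 1 / 2) := by
    refine prod_nbij' (fun k => (n + 2 + k) / 2) (fun j => 2 * j - (n + 2)) ?_ ?_ ?_ ?_ ?_
      <;> intro k hk <;> simp only [mem_filter, mem_range, mem_Icc] at hk ⊢
      <;> try omega
    rw [Nat.cast_div_charZero (by omega)]
    push_cast; ring
  rw [rfac, ← prod_filter_mul_prod_filter_not (range (n + 1)) (fun k => (n + 3 + k) % 2 = 0)]
  have hcard :
      (2 : K) ^ (n + 1) = 2 ^ (n + 1 + 1 - (n + 4) / 2) * 2 ^ (n + 1 + 1 - (n + 3) / 2) := by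
    rw [← pow_add]; congr 1; omega
  rw [hEven, hOdd, prod_mul_distrib, prod_mul_distrib, prod_const, prod_const, Nat.card_Icc,
    Nat.card_Icc, hcard]
  ring

lemma two_pow_mul_tentInt_mul_tentHalf_succ (y : K) (n : ℕ) :
    2 ^ (n + 1) * (tentInt y (n + 1) * tentHalf y (n + 1)) =
      tentInt y n * tentHalf y n * rfac (2 * y + n + 3) (n + 1) := by
  have hInt := prod_Icc_pow_min_succ (fun j : ℕ => y + j) (a := 2) (b := 1) (n := n) (by omega)
  have hHalf :=
    prod_Icc_pow_min_succ (fun j : ℕ => y + j + 1 / 2) (a := 1) (b := 0) (n := n) (by omega)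
  simp only [Nat.sub_zero] at hHalf
  rw [tentInt, tentInt, tentHalf, tentHalf, hInt, hHalf,
    ← two_pow_mul_prod_Icc_mul_prod_Icc_add_half]
  ring

lemma Bpoly_succ_mul {y z : K} (m n : ℕ) (hz : z = y + n + 2) (hhalf : rfac (z - 1 / 2) m ≠ 0) :
    Bpoly m (n + 1) y * (rfac (z - 1 / 2) m * rfac (2 * z - n - 1) m * 2 ^ (m + n + 1)) =
      Bpoly m n y * (rfac (z + 1) m * rfac (2 * z - n - 1) (n + 1) * rfac (2 * z - 1) (2 * m)) := by
  have hpow : ((2 : K) ^ (m * (n + 1) + m * (m - 1) / 2))⁻¹ * 2 ^ m =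
      ((2 : K) ^ (m * n + m * (m - 1) / 2))⁻¹ := by
    rw [show m * (n + 1) + m * (m - 1) / 2 = m * n + m * (m - 1) / 2 + m by ring, pow_add,
      mul_inv, inv_mul_cancel_right₀ (pow_ne_zero _ two_ne_zero)]
  have hratio :
      (∏ i ∈ Icc 1 (n + 1), rfac (y + i) m / rfac (y + i + 1 / 2) m) * rfac (z - 1 / 2) m =
      (∏ i ∈ Icc 1 n, rfac (y + i) m / rfac (y + i + 1 / 2) m) * rfac (z - 1) m := by
    rw [prod_Icc_succ_top (by omega), mul_assoc,
      show y + ((n + 1 : ℕ) : K) + 1 / 2 = z - 1 / 2 by push_cast; rw [hz]; ring,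
      div_mul_cancel₀ _ hhalf, show y + ((n + 1 : ℕ) : K) = z - 1 by push_cast; rw [hz]; ring]
  have hlast : (∏ i ∈ Icc 1 m, rfac (2 * y + ((n + 1 : ℕ) : K) + i + 2) (n + 1 + i - 1)) *
      rfac (2 * z - n - 1) m =
      (∏ i ∈ Icc 1 m, rfac (2 * y + n + i + 2) (n + i - 1)) * rfac (2 * z - 1) (2 * m) := by
    rw [show 2 * z - n - 1 = 2 * y + n + 2 + 1 by rw [hz]; ring, rfac_add_one_eq_prod_Icc,
      show 2 * z - 1 = 2 * y + 2 * n + 1 + 2 by rw [hz]; ring, ← prod_Icc_rfac_two,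
      ← prod_mul_distrib, ← prod_mul_distrib]
    refine prod_congr rfl fun i hi => ?_
    rw [mem_Icc] at hi
    rw [show 2 * y + n + 2 + (i : K) = 2 * y + n + i + 2 by ring,
      show n + 1 + i - 1 = n + i - 1 + 1 by omega,
      show 2 * y + ((n + 1 : ℕ) : K) + i + 2 = 2 * y + n + i + 2 + 1 by push_cast; ring, mul_comm,
      ← rfac_succ', show n + i - 1 + 1 + 1 = n + i - 1 + 2 by omega, rfac_add]
    push_cast [show 1 ≤ n + i by omega]
    ring_nf
  have htent := two_pow_mul_tentInt_mul_tentHalf_succ y n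
  rw [show 2 * y + n + 3 = 2 * z - n - 1 by rw [hz]; ring] at htent
  unfold Bpoly
  rw [show y + ((n + 1 : ℕ) : K) + 1 = y + n + 2 by push_cast; ring,
    show y + ((n + 1 : ℕ) : K) + 2 = z + 1 by push_cast; rw [hz]; ring,
    show y + n + 1 = z - 1 by rw [hz]; ring]
  set R' := ∏ i ∈ Icc 1 (n + 1), rfac (y + i) m / rfac (y + i + 1 / 2) m
  set S' := ∏ i ∈ Icc 1 m, rfac (2 * y + ((n + 1 : ℕ) : K) + i + 2) (n + 1 + i - 1)
  calc _ = ((2 : K) ^ (m * (n + 1) + m * (m - 1) / 2))⁻¹ * 2 ^ m * rfac (y + n + 2) m *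
        rfac (z + 1) m * (2 ^ (n + 1) * (tentInt y (n + 1) * tentHalf y (n + 1))) *
        (R' * rfac (z - 1 / 2) m) * (S' * rfac (2 * z - n - 1) m) := by ring
    _ = _ := by rw [hpow, htent, hratio, hlast]; ring

end Bpoly

def lFactor (l : ℕ → ℕ) (m n : ℕ) (x : ℚ) : ℚ :=
  ∏ i ∈ Icc 1 m, ∏ j ∈ Icc i (l i - 1), (x + l m - j) * (x + l m - m + n + j + 2)

def qFactor (l q : ℕ → ℕ) (m n : ℕ) (x : ℚ) : ℚ :=
  ∏ i ∈ Icc 1 n, ∏ j ∈ Icc i (q i - 1), (x + l m - m + n - j + 1) * (x + l m + j + 1)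

lemma Ppoly_eq (l q : ℕ → ℕ) (m n : ℕ) (x : ℚ) :
    Ppoly l q m n x =
      cConst l q m n * Bpoly m n (x + l m - m) * lFactor l m n x * qFactor l q m n x :=
  rfl

lemma lFactor_succ_mul {l : ℕ → ℕ} {m n : ℕ} {x z : ℚ} (hl : ∀ i ∈ Icc 1 m, i ≤ l i)
    (hz : z = x + l m - m + n + 2) :
    lFactor l m (n + 1) x * rfac (z + 1) m = lFactor l m n x * ∏ i ∈ Icc 1 m, ((l i : ℚ) + z) := by
  rw [rfac_add_one_eq_prod_Icc, lFactor, lFactor, ← prod_mul_distrib, ← prod_mul_distrib]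
  refine prod_congr rfl fun i hi => ?_
  have hshift : ∀ j ∈ Icc i (l i - 1), (x + l m - j) * (x + l m - m + ((n + 1 : ℕ) : ℚ) + j + 2) =
      (x + l m - j) * (z + ((j + 1 : ℕ) : ℚ)) := fun j _ => by push_cast; rw [hz]; ring
  have hbase : ∀ j ∈ Icc i (l i - 1), (x + l m - j) * (x + l m - m + n + j + 2) =
      (x + l m - j) * (z + j) := fun j _ => by rw [hz]; ring
  rw [prod_congr rfl hshift, prod_congr rfl hbase, prod_mul_distrib, prod_mul_distrib, mul_assoc,
    mul_assoc, prod_Icc_sub_one_succ_mul (fun j : ℕ => z + j) (mem_Icc.1 hi).1 (hl i hi),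
    add_comm z]

lemma qFactor_succ_mul {l q : ℕ → ℕ} {m n : ℕ} {x z : ℚ} (hq : ∀ i ∈ Icc 1 n, i ≤ q i)
    (hz : z = x + l m - m + n + 2) :
    qFactor l q m (n + 1) x * ∏ i ∈ Icc 1 n, (z - q i) =
      qFactor l q m n x * (∏ i ∈ Icc 1 n, (z - i)) *
        ∏ j ∈ Icc (n + 1) (q (n + 1) - 1), (z - j) * (z + m - n - 1 + j) := by
  rw [qFactor, qFactor, prod_Icc_succ_top (by omega)]
  have htop : ∀ j ∈ Icc (n + 1) (q (n + 1) - 1), (x + l m - m + ((n + 1 : ℕ) : ℚ) - j + 1) *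
      (x + l m + j + 1) = (z - j) * (z + m - n - 1 + j) := fun j _ => by push_cast; rw [hz]; ring
  rw [prod_congr rfl htop, mul_right_comm, ← prod_mul_distrib, ← prod_mul_distrib]
  congr 1
  refine prod_congr rfl fun i hi => ?_
  have hshift : ∀ j ∈ Icc i (q i - 1),
      (x + l m - m + ((n + 1 : ℕ) : ℚ) - j + 1) * (x + l m + j + 1) =
        (z - j) * (x + l m + j + 1) := fun j _ => by push_cast; rw [hz]; ring
  have hbase : ∀ j ∈ Icc i (q i - 1), (x + l m - m + n - j + 1) * (x + l m + j + 1) =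
      (z - ((j + 1 : ℕ) : ℚ)) * (x + l m + j + 1) := fun j _ => by push_cast; rw [hz]; ring
  rw [prod_congr rfl hshift, prod_congr rfl hbase, prod_mul_distrib, prod_mul_distrib,
    mul_right_comm, mul_right_comm _ _ (z - i),
    prod_Icc_sub_one_succ_mul (fun j : ℕ => z - j) (mem_Icc.1 hi).1 (hq i hi)]

lemma cConst_succ (l q : ℕ → ℕ) (m n : ℕ) :
    cConst l q m (n + 1) = cConst l q m n * 2 ^ ((n : ℤ) - m) * ((2 * q (n + 1) - 1)! : ℚ)⁻¹ *
      (∏ i ∈ Icc 1 n, ((q (n + 1) : ℚ) - q i)) / ∏ i ∈ Icc 1 m, ((l i : ℚ) + q (n + 1)) := by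
  have hexp : (((n + 1 : ℕ) : ℤ) - m) * (((n + 1 : ℕ) : ℤ) - m - 1) / 2 - m =
      (((n : ℤ) - m) * ((n : ℤ) - m - 1) / 2 - m) + ((n : ℤ) - m) := by
    rw [show (((n + 1 : ℕ) : ℤ) - m) * (((n + 1 : ℕ) : ℤ) - m - 1) =
      ((n : ℤ) - m) * ((n : ℤ) - m - 1) + ((n : ℤ) - m) * 2 by push_cast; ring,
      Int.add_mul_ediv_right _ _ two_ne_zero]
    ring
  have hdiff : ∏ i ∈ Icc 1 (n + 1), ∏ j ∈ Icc (i + 1) (n + 1), ((q j : ℚ) - q i) =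
      (∏ i ∈ Icc 1 n, ∏ j ∈ Icc (i + 1) n, ((q j : ℚ) - q i)) *
        ∏ i ∈ Icc 1 n, ((q (n + 1) : ℚ) - q i) := by
    rw [prod_Icc_succ_top (by omega), Icc_eq_empty_of_lt (Nat.lt_succ_self _), prod_empty, mul_one,
      ← prod_mul_distrib]
    exact prod_congr rfl fun i hi => prod_Icc_succ_top (by simp at hi; omega) _
  have hsum : ∏ i ∈ Icc 1 m, ∏ j ∈ Icc 1 (n + 1), ((l i : ℚ) + q j) =
      (∏ i ∈ Icc 1 m, ∏ j ∈ Icc 1 n, ((l i : ℚ) + q j)) *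
        ∏ i ∈ Icc 1 m, ((l i : ℚ) + q (n + 1)) := by
    rw [← prod_mul_distrib]
    exact prod_congr rfl fun i _ => prod_Icc_succ_top (by omega) _
  rw [cConst, cConst, hexp, zpow_add₀ two_ne_zero, prod_Icc_succ_top (by omega), hdiff, hsum]
  ring

lemma boundary_ratio_eq_half (m N Q : ℕ) (hQ : N < Q) :
    2 ^ ((N : ℤ) - m) * ((2 * Q - 1)! : ℚ)⁻¹ * (∏ i ∈ Icc 1 N, ((Q : ℚ) - i)) *
      (∏ j ∈ Icc (N + 1) (Q - 1), ((Q : ℚ) - j) * (Q + m - N - 1 + j)) *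
      (rfac (2 * (Q : ℚ) - N - 1) (N + 1) * rfac (2 * (Q : ℚ) - 1) (2 * m)) =
    1 / 2 * (rfac ((Q : ℚ) - 1 / 2) m * rfac (2 * (Q : ℚ) - N - 1) m * 2 ^ (m + N + 1)) := by
  set a := 2 * Q - N - 2
  have ha : 2 * (Q : ℚ) - N - 1 = (a : ℚ) + 1 := by
    have : (a : ℚ) + N + 2 = 2 * Q := by exact_mod_cast (show a + N + 2 = 2 * Q by omega)
    linarith
  have hD : rfac (2 * (Q : ℚ) - N - 1) (N + 1) = (2 * Q - 1)! / a ! := by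
    rw [eq_div_iff (by positivity), mul_comm, ha, factorial_mul_rfac,
      show a + (N + 1) = 2 * Q - 1 by omega]
  have hG : rfac (2 * (Q : ℚ) - N - 1) m = (a + m)! / a ! := by
    rw [eq_div_iff (by positivity), mul_comm, ha, factorial_mul_rfac]
  have hQm : rfac ((Q : ℚ) - 1 / 2 + 1 / 2) m = (Q + m - 1)! / (Q - 1)! := by
    rw [eq_div_iff (by positivity), mul_comm,
      show (Q : ℚ) - 1 / 2 + 1 / 2 = ((Q - 1 : ℕ) : ℚ) + 1 by rw [Nat.cast_sub (by omega)]; ring,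
      factorial_mul_rfac, show Q - 1 + m = Q + m - 1 by omega]
  have hW : rfac (2 * (Q : ℚ) - 1) (2 * m) =
      2 ^ (2 * m) * rfac ((Q : ℚ) - 1 / 2) m * ((Q + m - 1)! / (Q - 1)!) := by
    rw [show 2 * (Q : ℚ) - 1 = 2 * ((Q : ℚ) - 1 / 2) by ring, rfac_two_mul, hQm]
  have hE : ∏ j ∈ Icc (N + 1) (Q - 1), ((Q : ℚ) + m - N - 1 + j) = (a + m)! / (Q + m - 1)! := by
    rw [eq_div_iff (by positivity), mul_comm,
      Icc_sub_one_right_eq_Ico_of_not_isMin (by simp; omega), prod_Ico_eq_prod_range,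
      show a + m = Q + m - 1 + (Q - (N + 1)) by omega, ← factorial_mul_rfac (K := ℚ)]
    congr 1
    refine prod_congr rfl fun k _ => ?_
    rw [Nat.cast_sub (by omega)]
    push_cast; ring
  have hP : ∏ i ∈ Icc 1 N, ((Q : ℚ) - i) = (Q - 1)! / (Q - N - 1)! := by
    rw [eq_div_iff (by positivity), show Icc 1 N = Ioc 0 N from Icc_add_one_left_eq_Ioc 0 N,
      prod_Ioc_natCast_sub_mul_factorial (Nat.zero_le N) hQ, Nat.sub_zero]
  have hP' : ∏ j ∈ Icc (N + 1) (Q - 1), ((Q : ℚ) - j) = (Q - N - 1)! := by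
    have :=
      prod_Ioc_natCast_sub_mul_factorial (K := ℚ) (a := N) (b := Q - 1) (Q := Q) (by omega) (by omega)
    rwa [show Q - (Q - 1) - 1 = 0 by omega, Nat.factorial_zero, Nat.cast_one, mul_one,
      ← Icc_add_one_left_eq_Ioc] at this
  rw [prod_mul_distrib, hD, hG, hW, hE, hP, hP', zpow_sub₀ two_ne_zero, zpow_natCast, zpow_natCast]
  field_simp
  ring

lemma Ppoly_succ_mul_at_boundary {l q : ℕ → ℕ} {m n : ℕ} {x : ℚ} (hl : ∀ i ∈ Icc 1 m, i ≤ l i)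
    (hq : ∀ i ∈ Icc 1 n, i ≤ q i) (hqQ : ∀ i ∈ Icc 1 n, q i < q (n + 1)) (hQ : n < q (n + 1))
    (hx : (q (n + 1) : ℚ) = x + l m - m + n + 2) :
    Ppoly l q m (n + 1) x *
        (rfac ((q (n + 1) : ℚ) - 1 / 2) m * rfac (2 * (q (n + 1) : ℚ) - n - 1) m *
          2 ^ (m + n + 1)) =
      Ppoly l q m n x * (2 ^ ((n : ℤ) - m) * ((2 * q (n + 1) - 1)! : ℚ)⁻¹ *
        (∏ i ∈ Icc 1 n, ((q (n + 1) : ℚ) - i)) *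
        (∏ j ∈ Icc (n + 1) (q (n + 1) - 1), ((q (n + 1) : ℚ) - j) * (q (n + 1) + m - n - 1 + j)) *
        (rfac (2 * (q (n + 1) : ℚ) - n - 1) (n + 1) * rfac (2 * (q (n + 1) : ℚ) - 1) (2 * m))) := by
  have hQ' : (n : ℚ) + 1 ≤ q (n + 1) := by exact_mod_cast hQ
  have hH : rfac ((q (n + 1) : ℚ) - 1 / 2) m ≠ 0 := (rfac_pos (by linarith) m).ne'
  have hG : rfac (2 * (q (n + 1) : ℚ) - n - 1) m ≠ 0 := (rfac_pos (by linarith) m).ne'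
  have hA : rfac ((q (n + 1) : ℚ) + 1) m ≠ 0 := (rfac_pos (by positivity) m).ne'
  have hC : ∏ i ∈ Icc 1 n, ((q (n + 1) : ℚ) - q i) ≠ 0 :=
    (prod_pos fun i hi => sub_pos.2 (by exact_mod_cast hqQ i hi)).ne'
  have hc : ∏ i ∈ Icc 1 m, ((l i : ℚ) + q (n + 1)) ≠ 0 :=
    (prod_pos fun i hi => by
      have : (1 : ℚ) ≤ l i := by exact_mod_cast (mem_Icc.1 hi).1.trans (hl i hi)
      positivity).ne'
  rw [Ppoly_eq, Ppoly_eq, cConst_succ,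
    eq_div_of_mul_eq (by positivity) (Bpoly_succ_mul (y := x + l m - m) m n (by rw [hx]) hH),
    eq_div_of_mul_eq hA (lFactor_succ_mul hl hx), eq_div_of_mul_eq hC (qFactor_succ_mul hq hx)]
  -- Otherwise `field_simp` rewrites the arguments of these two `rfac` and no longer sees that
  -- they are nonzero.
  set H := rfac ((q (n + 1) : ℚ) - 1 / 2) m
  set G := rfac (2 * (q (n + 1) : ℚ) - n - 1) m
  field_simp

lemma Ppoly_succ_at_boundary {l q : ℕ → ℕ} {m n : ℕ} {x : ℚ} (hl : ∀ i ∈ Icc 1 m, i ≤ l i)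
    (hq : ∀ i ∈ Icc 1 n, i ≤ q i) (hqQ : ∀ i ∈ Icc 1 n, q i < q (n + 1)) (hQ : n < q (n + 1))
    (hx : (q (n + 1) : ℚ) = x + l m - m + n + 2) :
    Ppoly l q m (n + 1) x = 1 / 2 * Ppoly l q m n x := by
  have hQ' : (n : ℚ) + 1 ≤ q (n + 1) := by exact_mod_cast hQ
  have hH := rfac_pos (K := ℚ) (a := (q (n + 1) : ℚ) - 1 / 2) (by linarith) m
  have hG := rfac_pos (K := ℚ) (a := 2 * (q (n + 1) : ℚ) - n - 1) (by linarith) m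
  have key := Ppoly_succ_mul_at_boundary hl hq hqQ hQ hx
  rw [boundary_ratio_eq_half m n _ hQ] at key
  exact mul_right_cancel₀ (by positivity) (key.trans (by ring))

theorem Ppoly_boundary_q_general (m n : ℕ) (l q : ℕ → ℕ) (hn : 1 ≤ n)
    (hlpos : ∀ i, 1 ≤ i → i ≤ m → 1 ≤ l i)
    (hlmono : ∀ i, 1 ≤ i → i < m → l i < l (i + 1))
    (hqpos : ∀ i, 1 ≤ i → i ≤ n → 1 ≤ q i)
    (hqmono : ∀ i, 1 ≤ i → i < n → q i < q (i + 1)) :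
    Ppoly l q m n ((q n : ℚ) - l m - n + m - 1) =
      (1 / 2) * Ppoly l q m (n - 1) ((q n : ℚ) - l m - n + m - 1) := by
  obtain ⟨N, rfl⟩ : ∃ N, n = N + 1 := ⟨n - 1, by omega⟩
  have hq := self_le_of_lt_succ hqpos hqmono
  have hqQ : ∀ i ∈ Icc 1 N, q i < q (N + 1) := fun i hi => by
    rw [mem_Icc] at hi
    have := add_sub_le_of_lt_succ hqmono hi.1 (by omega) le_rfl
    omega
  rw [Nat.add_sub_cancel]
  exact Ppoly_succ_at_boundary (self_le_of_lt_succ hlpos hlmono)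
    (fun i hi => hq i (Icc_subset_Icc_right (by omega) hi)) hqQ (hq (N + 1) (by simp))
    (by push_cast; ring)

/-- First equality of Lemma 5.3: for strictly increasing positive lists
`l = (l_1,...,l_m)` (`m ≥ 0`, `l_m` read as `0` when `m = 0`) and
`q = (q_1,...,q_n)` (`n ≥ 1`),
`P_{l,q}(q_n - l_m - n + m - 1) = (1/2)·P_{l,q^{(n)}}(q_n - l_m - n + m - 1)`. -/
theorem Ppoly_boundary_q (m n : ℕ) (l q : ℕ → ℕ) (hn : 1 ≤ n) (hl0 : l 0 = 0)
    (hlpos : ∀ i, 1 ≤ i → i ≤ m → 1 ≤ l i)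
    (hlmono : ∀ i, 1 ≤ i → i < m → l i < l (i + 1))
    (hqpos : ∀ i, 1 ≤ i → i ≤ n → 1 ≤ q i)
    (hqmono : ∀ i, 1 ≤ i → i < n → q i < q (i + 1)) :
    Ppoly l q m n ((q n : ℚ) - l m - n + m - 1) =
      (1 / 2) * Ppoly l q m (n - 1) ((q n : ℚ) - l m - n + m - 1) :=
  Ppoly_boundary_q_general m n l q hn hlpos hlmono hqpos hqmono
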